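/- Let X and Y be Banach spaces over 𝕂 (= ℝ or ℂ), let Γ be an arbitrary nonempty set, let E be an invariant sequence space over X, and for each l ∈ Γ let F_l be a strongly invariant sequence space over 𝕂. If f : X → Y is strongly compatible with F_l^w(Y) for every l ∈ Γ, then the set G^w(E, f, (F_l)_{l∈Γ}) = { (x_j)_{j=1}^∞ ∈ E : (f(x_j))_{j=1}^∞ ∉ ⋃_{l∈Γ} F_l^w(Y) } is either empty or spaceable in E. -/

import Mathlib

open scoped Classical

/-- The zero-deleted sequence `x⁰`: if `x` has infinitely many nonzero coordinates, the
sequence of its nonzero coordinates in order; otherwise `0`. -/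
noncomputable def zeroFree {X : Type*} [Zero X] (x : ℕ → X) : ℕ → X :=
  if {j | x j ≠ 0}.Infinite then fun k => x (Nat.nth (fun j => x j ≠ 0) k) else 0

/-- An invariant sequence space over a Banach space `X` (Definition 1.1 of the paper):
an infinite-dimensional Banach space of `X`-valued sequences such that
(b1) for `x` with `x⁰ ≠ 0`, `x ∈ E ↔ x⁰ ∈ E` and `‖x‖ ≤ K‖x⁰‖`, and
(b2) `‖x j‖ ≤ ‖x‖` for every `x ∈ E` and every `j`.  Completeness and closedness are
expressed via the metric induced by the norm function. -/
structure InvariantSeqSpace (𝕂 : Type*) (X : Type*) [RCLike 𝕂]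
    [NormedAddCommGroup X] [NormedSpace 𝕂 X] where
  carrier : Submodule 𝕂 (ℕ → X)
  norm : (ℕ → X) → ℝ
  norm_nonneg : ∀ x ∈ carrier, 0 ≤ norm x
  norm_eq_zero_iff : ∀ x ∈ carrier, (norm x = 0 ↔ x = 0)
  norm_smul : ∀ (a : 𝕂), ∀ x ∈ carrier, norm (a • x) = ‖a‖ * norm x
  norm_add_le : ∀ x ∈ carrier, ∀ y ∈ carrier, norm (x + y) ≤ norm x + norm y
  complete : ∀ u : ℕ → ℕ → X, (∀ n, u n ∈ carrier) →
    (∀ ε : ℝ, 0 < ε → ∃ N, ∀ m ≥ N, ∀ n ≥ N, norm (u m - u n) < ε) →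
    ∃ x ∈ carrier, ∀ ε : ℝ, 0 < ε → ∃ N, ∀ n ≥ N, norm (u n - x) < ε
  infiniteDimensional : ¬ Module.Finite 𝕂 carrier
  K : ℝ
  K_pos : 0 < K
  mem_iff_zeroFree_mem : ∀ x : ℕ → X, zeroFree x ≠ 0 → (x ∈ carrier ↔ zeroFree x ∈ carrier)
  norm_le_K_mul : ∀ x : ℕ → X, zeroFree x ≠ 0 → x ∈ carrier → norm x ≤ K * norm (zeroFree x)
  coord_norm_le : ∀ x ∈ carrier, ∀ j : ℕ, ‖x j‖ ≤ norm x

/-- A strongly invariant sequence space: an invariant sequence space containing `c₀₀(X)`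
and such that a sequence belongs to the space iff all of its subsequences do. -/
structure StronglyInvariantSeqSpace (𝕂 : Type*) (X : Type*) [RCLike 𝕂]
    [NormedAddCommGroup X] [NormedSpace 𝕂 X] extends InvariantSeqSpace 𝕂 X where
  c00_subset : ∀ x : ℕ → X, {j | x j ≠ 0}.Finite → x ∈ carrier
  mem_iff_subseq : ∀ x : ℕ → X,
    x ∈ carrier ↔ ∀ n : ℕ → ℕ, StrictMono n → (fun k => x (n k)) ∈ carrier

/-- A subset `A` of an invariant sequence space `E` is spaceable if `A ∪ {0}` contains a
closed (w.r.t. the norm of `E`) infinite-dimensional linear subspace of `E`. -/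
def Spaceable {𝕂 X : Type*} [RCLike 𝕂] [NormedAddCommGroup X] [NormedSpace 𝕂 X]
    (E : InvariantSeqSpace 𝕂 X) (A : Set (ℕ → X)) : Prop :=
  ∃ V : Submodule 𝕂 (ℕ → X), V ≤ E.carrier ∧ ¬ Module.Finite 𝕂 V ∧
    (V : Set (ℕ → X)) ⊆ A ∪ {0} ∧
    ∀ u : ℕ → ℕ → X, (∀ n, u n ∈ V) → ∀ z ∈ E.carrier,
      (∀ ε : ℝ, 0 < ε → ∃ N, ∀ n ≥ N, E.norm (u n - z) < ε) → z ∈ V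

/-- For an invariant sequence space `F` over the scalar field `𝕂` and a Banach space `Y`,
`F^w(Y) = {(x_j) ∈ Y^ℕ : (φ(x_j))_j ∈ F for every φ ∈ Y'}`. -/
def weakSpace {𝕂 : Type*} [RCLike 𝕂] (F : InvariantSeqSpace 𝕂 𝕂)
    (Y : Type*) [NormedAddCommGroup Y] [NormedSpace 𝕂 Y] : Set (ℕ → Y) :=
  {x | ∀ φ : Y →L[𝕂] 𝕂, (fun j => φ (x j)) ∈ F.carrier}

/-- `f : X → Y` with `f 0 = 0` is strongly compatible with `F^w(Y)` if `φ ∘ f` is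
compatible with `F` for every continuous linear functional `φ : Y → 𝕂`. -/
def StronglyCompatible {𝕂 X Y : Type*} [RCLike 𝕂]
    [NormedAddCommGroup X] [NormedSpace 𝕂 X] [NormedAddCommGroup Y] [NormedSpace 𝕂 Y]
    (f : X → Y) (F : InvariantSeqSpace 𝕂 𝕂) : Prop :=
  f 0 = 0 ∧ ∀ (φ : Y →L[𝕂] 𝕂) (x : ℕ → X) (a : 𝕂), a ≠ 0 →
    (fun j => φ (f (x j))) ∉ F.carrier → (fun j => φ (f (a • x j))) ∉ F.carrier

/-!
Pick `x` in the set. It has infinitely many nonzero coordinates, for otherwise `f ∘ x` would be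
finitely supported and hence in every `F_l^w(Y)`. Through the pairing `ℕ ≃ ℕ × ℕ`, consider the
sequences each of whose columns is a scalar multiple of `x`. Their intersection with `E` is
infinite-dimensional, since the copies of `x` in distinct columns lie in `E` by invariance under
deleting zeros. It is closed, since convergence in `E` implies convergence of every coordinate,
and a continuous functional normalised at a nonzero entry of `x` reads off the coefficient of
each column. A nonzero element has some `c • x` with `c ≠ 0` as a subsequence, so strong invariance
of `F_l` together with compatibility of `f` keeps it outside every `F_l^w(Y)`.
-/

open Filter Topology

section Spread

variable {X : Type*} [Zero X]

/-- `spread x i` places `x` in the `i`-th column `k ↦ Nat.pair i k`, and zeros elsewhere. -/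
noncomputable def spread (x : ℕ → X) (i : ℕ) : ℕ → X :=
  fun j => if (Nat.unpair j).1 = i then x (Nat.unpair j).2 else 0

@[simp]
lemma spread_pair (x : ℕ → X) (i i' k : ℕ) :
    spread x i (Nat.pair i' k) = if i' = i then x k else 0 := by
  simp [spread]

lemma strictMono_pair (i : ℕ) : StrictMono (Nat.pair i) :=
  fun _ _ h => Nat.pair_lt_pair_right i h

lemma zeroFree_eq_of_strictMono {g : ℕ → ℕ} (hg : StrictMono g) {x y : ℕ → X}
    (hyx : ∀ k, y (g k) = x k) (hy : ∀ j, y j ≠ 0 → j ∈ Set.range g) :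
    zeroFree y = zeroFree x := by
  have hsupp : {j | y j ≠ 0} = g '' {k | x k ≠ 0} := by
    ext j
    refine ⟨fun hj => ?_, ?_⟩
    · obtain ⟨k, rfl⟩ := hy j hj
      exact ⟨k, by simpa [hyx] using hj, rfl⟩
    · rintro ⟨k, hk, rfl⟩
      simpa [hyx] using hk
  have hinf : {j | y j ≠ 0}.Infinite ↔ {k | x k ≠ 0}.Infinite := by
    rw [hsupp, Set.infinite_image_iff hg.injective.injOn]
  unfold zeroFree
  by_cases h : {k | x k ≠ 0}.Infinite
  · rw [if_pos (hinf.2 h), if_pos h]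
    funext n
    rw [← Nat.nth_comp_of_strictMono hg hy fun hfin => absurd hfin (hinf.2 h), hyx]
    simp only [hyx]
  · rw [if_neg (mt hinf.1 h), if_neg h]

lemma zeroFree_spread (x : ℕ → X) (i : ℕ) : zeroFree (spread x i) = zeroFree x := by
  refine zeroFree_eq_of_strictMono (strictMono_pair i) (by simp) fun j hj => ?_
  have hi : (Nat.unpair j).1 = i := by
    by_contra h
    exact hj (if_neg h)
  exact ⟨(Nat.unpair j).2, by rw [← hi, Nat.pair_unpair]⟩

lemma zeroFree_ne_zero {x : ℕ → X} (h : {j | x j ≠ 0}.Infinite) : zeroFree x ≠ 0 := by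
  intro h0
  have := congrFun h0 0
  rw [zeroFree, if_pos h] at this
  exact Nat.nth_mem_of_infinite h 0 this

end Spread

section ColumnMultiples

variable (R : Type*) {M : Type*} [Semiring R] [AddCommMonoid M] [Module R M]

def columnMultiples (x : ℕ → M) : Submodule R (ℕ → M) where
  carrier := {z | ∀ i, ∃ c : R, ∀ k, z (Nat.pair i k) = c • x k}
  add_mem' := by
    rintro z w hz hw i
    obtain ⟨c, hc⟩ := hz i
    obtain ⟨d, hd⟩ := hw i
    exact ⟨c + d, fun k => by simp [hc, hd, add_smul]⟩
  zero_mem' := fun _ => ⟨0, by simp⟩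
  smul_mem' := by
    rintro a z hz i
    obtain ⟨c, hc⟩ := hz i
    exact ⟨a * c, fun k => by simp [hc, mul_smul]⟩

variable {R}

lemma mem_columnMultiples {x z : ℕ → M} :
    z ∈ columnMultiples R x ↔ ∀ i, ∃ c : R, ∀ k, z (Nat.pair i k) = c • x k :=
  Iff.rfl

lemma spread_mem_columnMultiples (x : ℕ → M) (i : ℕ) : spread x i ∈ columnMultiples R x :=
  fun i' => ⟨if i' = i then 1 else 0, fun k => by by_cases h : i' = i <;> simp [h]⟩

lemma exists_ne_zero_column_eq_smul {x z : ℕ → M} (hz : z ∈ columnMultiples R x)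
    (hz0 : z ≠ 0) : ∃ i, ∃ c : R, c ≠ 0 ∧ ∀ k, z (Nat.pair i k) = c • x k := by
  obtain ⟨j, hj⟩ := Function.ne_iff.1 hz0
  obtain ⟨c, hc⟩ := hz (Nat.unpair j).1
  refine ⟨_, c, fun h => hj ?_, hc⟩
  rw [← Nat.pair_unpair j, hc, h, zero_smul]
  rfl

end ColumnMultiples

lemma linearIndependent_spread {K M : Type*} [DivisionRing K] [AddCommGroup M] [Module K M]
    {x : ℕ → M} (hx : x ≠ 0) : LinearIndependent K (spread x) := by
  obtain ⟨k, hk⟩ := Function.ne_iff.1 hx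
  rw [linearIndependent_iff']
  intro s g hsum i hi
  have hcoord := congrFun hsum (Nat.pair i k)
  simp only [Finset.sum_apply, Pi.smul_apply, Pi.zero_apply, spread_pair, smul_ite,
    smul_zero, Finset.sum_ite_eq, if_pos hi] at hcoord
  exact (smul_eq_zero.1 hcoord).resolve_right hk

lemma not_finite_of_linearIndependent {K M ι : Type*} [DivisionRing K] [AddCommGroup M]
    [Module K M] [Infinite ι] {V : Submodule K M} {v : ι → M} (hv : LinearIndependent K v)
    (hvV : ∀ i, v i ∈ V) : ¬ Module.Finite K V := fun _ =>
  Module.Finite.not_linearIndependent_of_infinite (fun i => (⟨v i, hvV i⟩ : V))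
    (LinearIndependent.of_comp V.subtype hv)

section Normed

variable {𝕂 X : Type*} [RCLike 𝕂] [NormedAddCommGroup X] [NormedSpace 𝕂 X]

lemma isClosed_columnMultiples {x : ℕ → X} (hx : x ≠ 0) :
    IsClosed (columnMultiples 𝕂 x : Set (ℕ → X)) := by
  obtain ⟨k₀, hk₀⟩ := Function.ne_iff.1 hx
  obtain ⟨φ, hφ⟩ : ∃ φ : X →L[𝕂] 𝕂, φ (x k₀) = 1 := SeparatingDual.exists_eq_one hk₀
  have hW : (columnMultiples 𝕂 x : Set (ℕ → X)) =
      ⋂ i, ⋂ k, {z | z (Nat.pair i k) = φ (z (Nat.pair i k₀)) • x k} := by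
    ext z
    simp only [SetLike.mem_coe, mem_columnMultiples, Set.mem_iInter, Set.mem_ofPred_eq]
    refine ⟨fun hz i k => ?_, fun hz i => ⟨_, hz i⟩⟩
    obtain ⟨c, hc⟩ := hz i
    rw [hc, hc, map_smul, hφ, smul_eq_mul, mul_one]
  rw [hW]
  exact isClosed_iInter fun i => isClosed_iInter fun k => isClosed_eq (continuous_apply _)
    ((φ.continuous.comp (continuous_apply _)).smul continuous_const)

namespace InvariantSeqSpace

variable (E : InvariantSeqSpace 𝕂 X)

lemma spread_mem {x : ℕ → X} (hx : x ∈ E.carrier) (hinf : {j | x j ≠ 0}.Infinite) (i : ℕ) :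
    spread x i ∈ E.carrier := by
  have h0 : zeroFree x ≠ 0 := zeroFree_ne_zero hinf
  rw [E.mem_iff_zeroFree_mem _ (zeroFree_spread x i ▸ h0), zeroFree_spread]
  exact (E.mem_iff_zeroFree_mem x h0).1 hx

lemma tendsto_of_norm_sub_lt {u : ℕ → ℕ → X} {z : ℕ → X} (hu : ∀ n, u n ∈ E.carrier)
    (hz : z ∈ E.carrier) (h : ∀ ε : ℝ, 0 < ε → ∃ N, ∀ n ≥ N, E.norm (u n - z) < ε) :
    Tendsto u atTop (𝓝 z) := by
  refine tendsto_pi_nhds.2 fun j => Metric.tendsto_atTop.2 fun ε hε => ?_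
  obtain ⟨N, hN⟩ := h ε hε
  refine ⟨N, fun n hn => ?_⟩
  rw [dist_eq_norm]
  exact (E.coord_norm_le _ (sub_mem (hu n) hz) j).trans_lt (hN n hn)

end InvariantSeqSpace

lemma Spaceable.of_isClosed {E : InvariantSeqSpace 𝕂 X} {A : Set (ℕ → X)}
    {W : Submodule 𝕂 (ℕ → X)} (hW : IsClosed (W : Set (ℕ → X)))
    (hinf : ¬ Module.Finite 𝕂 (E.carrier ⊓ W : Submodule 𝕂 (ℕ → X)))
    (hA : ((E.carrier ⊓ W : Submodule 𝕂 (ℕ → X)) : Set (ℕ → X)) ⊆ A ∪ {0}) :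
    Spaceable E A :=
  ⟨E.carrier ⊓ W, inf_le_left, hinf, hA, fun _ hu _ hz hlim =>
    ⟨hz, hW.mem_of_tendsto (E.tendsto_of_norm_sub_lt (fun n => (hu n).1) hz hlim)
      (Eventually.of_forall fun n => (hu n).2)⟩⟩

namespace StronglyInvariantSeqSpace

variable {Y : Type*} [NormedAddCommGroup Y] [NormedSpace 𝕂 Y] (F : StronglyInvariantSeqSpace 𝕂 𝕂)

lemma mem_weakSpace_of_finite {y : ℕ → Y} (hy : {j | y j ≠ 0}.Finite) :
    y ∈ weakSpace F.toInvariantSeqSpace Y :=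
  fun φ => F.c00_subset _ (hy.subset fun j hj hyj => hj (by rw [hyj, map_zero]))

lemma notMem_weakSpace_of_subseq {f : X → Y} (hf : StronglyCompatible f F.toInvariantSeqSpace)
    {x z : ℕ → X} (hx : (fun j => f (x j)) ∉ weakSpace F.toInvariantSeqSpace Y)
    {n : ℕ → ℕ} (hn : StrictMono n) {c : 𝕂} (hc : c ≠ 0) (hz : ∀ k, z (n k) = c • x k) :
    (fun j => f (z j)) ∉ weakSpace F.toInvariantSeqSpace Y := by
  intro hmem
  obtain ⟨φ, hφ⟩ : ∃ φ : Y →L[𝕂] 𝕂, (fun j => φ (f (x j))) ∉ F.carrier := by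
    simpa [weakSpace] using hx
  apply hf.2 φ x c hc hφ
  simpa only [hz] using (F.mem_iff_subseq _).1 (hmem φ) n hn

end StronglyInvariantSeqSpace

end Normed

theorem spaceability_of_Gw_general {𝕂 X Y : Type*} [RCLike 𝕂]
    [NormedAddCommGroup X] [NormedSpace 𝕂 X]
    [NormedAddCommGroup Y] [NormedSpace 𝕂 Y]
    {Γ : Type*} [Nonempty Γ]
    (E : InvariantSeqSpace 𝕂 X) (Fl : Γ → StronglyInvariantSeqSpace 𝕂 𝕂)
    (f : X → Y) (hf : ∀ l : Γ, StronglyCompatible f (Fl l).toInvariantSeqSpace) :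
    {x : ℕ → X | x ∈ E.carrier ∧
        ∀ l : Γ, (fun j => f (x j)) ∉ weakSpace (Fl l).toInvariantSeqSpace Y} = ∅ ∨
      Spaceable E {x : ℕ → X | x ∈ E.carrier ∧
        ∀ l : Γ, (fun j => f (x j)) ∉ weakSpace (Fl l).toInvariantSeqSpace Y} := by
  refine (Set.eq_empty_or_nonempty _).imp id fun ⟨x, hxE, hxG⟩ => ?_
  obtain ⟨l₀⟩ := ‹Nonempty Γ›
  have hinf : {j | x j ≠ 0}.Infinite := fun hfin => hxG l₀ <|
    (Fl l₀).mem_weakSpace_of_finite <| hfin.subset fun j hj hxj => hj (by rw [hxj, (hf l₀).1])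
  have hx0 : x ≠ 0 := fun h => hinf (by simp [h])
  refine Spaceable.of_isClosed (isClosed_columnMultiples hx0) ?_ ?_
  · exact not_finite_of_linearIndependent (linearIndependent_spread hx0)
      fun i => ⟨E.spread_mem hxE hinf i, spread_mem_columnMultiples x i⟩
  · rintro z ⟨hzE, hzW⟩
    by_cases hz0 : z = 0
    · exact Or.inr hz0
    obtain ⟨i, c, hc, hzc⟩ := exists_ne_zero_column_eq_smul hzW hz0
    exact Or.inl ⟨hzE, fun l =>
      (Fl l).notMem_weakSpace_of_subseq (hf l) (hxG l) (strictMono_pair i) hc hzc⟩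

/-- **Theorem 3.8 (the weak case).**  If `E` is an invariant sequence space over `X`,
`(F_l)_{l ∈ Γ}` are strongly invariant sequence spaces over `𝕂` and `f : X → Y` is
strongly compatible with every `F_l^w(Y)`, then
`G^w(E, f, (F_l)) = {(x_j) ∈ E : (f(x_j)) ∉ ⋃_l F_l^w(Y)}` is either empty or spaceable. -/
theorem spaceability_of_Gw {𝕂 X Y : Type*} [RCLike 𝕂]
    [NormedAddCommGroup X] [NormedSpace 𝕂 X] [CompleteSpace X]
    [NormedAddCommGroup Y] [NormedSpace 𝕂 Y] [CompleteSpace Y]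
    {Γ : Type*} [Nonempty Γ]
    (E : InvariantSeqSpace 𝕂 X) (Fl : Γ → StronglyInvariantSeqSpace 𝕂 𝕂)
    (f : X → Y) (hf : ∀ l : Γ, StronglyCompatible f (Fl l).toInvariantSeqSpace) :
    {x : ℕ → X | x ∈ E.carrier ∧
        ∀ l : Γ, (fun j => f (x j)) ∉ weakSpace (Fl l).toInvariantSeqSpace Y} = ∅ ∨
      Spaceable E {x : ℕ → X | x ∈ E.carrier ∧
        ∀ l : Γ, (fun j => f (x j)) ∉ weakSpace (Fl l).toInvariantSeqSpace Y} :=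
  spaceability_of_Gw_general E Fl f hf
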